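/- arXiv:1603.03196 — 5 statements merged into one kernel-verified Lean document; each statement's English description precedes it below -/
import Mathlib

section
/- Let u, v : {0,...,N} → ℝ be two grid functions with u_0 = v_0 and u_N = v_N, and suppose f : ℝ → ℝ is nondecreasing and both satisfy the discrete semilinear equation (L_h w)_i = f(w_i) for all 1 ≤ i ≤ N-1. Then u = v. -/
/-!
Where `w = u - v` is positive, monotonicity of `f` makes its discrete Laplacian nonnegative,
i.e. `2 w i ≤ w (i - 1) + w (i + 1)`. If `w` had a positive maximum on `{0, …, N}`, its leftmost
maximiser would be interior, with left neighbour strictly smaller and right neighbour no larger,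
contradicting this. So `u ≤ v`, and `v ≤ u` by symmetry.
-/

noncomputable def discreteLaplacian (h : ℝ) (w : ℕ → ℝ) (i : ℕ) : ℝ :=
  (w (i - 1) - 2 * w i + w (i + 1)) / h ^ 2

lemma discreteLaplacian_sub (h : ℝ) (u v : ℕ → ℝ) (i : ℕ) :
    discreteLaplacian h (u - v) i = discreteLaplacian h u i - discreteLaplacian h v i := by
  simp only [discreteLaplacian, Pi.sub_apply]
  ring

lemma two_mul_le_of_discreteLaplacian_nonneg {h : ℝ} (hh : h ≠ 0) {w : ℕ → ℝ} {i : ℕ}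
    (hw : 0 ≤ discreteLaplacian h w i) : 2 * w i ≤ w (i - 1) + w (i + 1) := by
  have := mul_nonneg hw (sq_nonneg h)
  rw [discreteLaplacian, div_mul_cancel₀ _ (pow_ne_zero 2 hh)] at this
  linarith

theorem nonpos_of_discreteLaplacian_nonneg_of_pos {N : ℕ} {h : ℝ} (hh : h ≠ 0) {w : ℕ → ℝ}
    (h0 : w 0 ≤ 0) (hN : w N ≤ 0)
    (hw : ∀ i, 1 ≤ i → i < N → 0 < w i → 0 ≤ discreteLaplacian h w i) :
    ∀ i ≤ N, w i ≤ 0 := by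
  have hex : ∃ i ≤ N, ∀ j ≤ N, w j ≤ w i := by
    obtain ⟨i, hi, hmax⟩ := Finset.exists_max_image (Finset.range (N + 1)) w ⟨0, by simp⟩
    exact ⟨i, by simpa [Nat.lt_succ_iff] using hi,
      fun j hj => hmax j (by simpa [Nat.lt_succ_iff] using hj)⟩
  obtain ⟨hiN, hmax⟩ := Nat.find_spec hex
  set i₀ := Nat.find hex
  suffices w i₀ ≤ 0 from fun j hj => (hmax j hj).trans this
  by_contra! hpos
  have h1 : 1 ≤ i₀ := Nat.one_le_iff_ne_zero.2 fun h => by rw [h] at hpos; linarith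
  have hlt : i₀ < N := lt_of_le_of_ne hiN fun h => by rw [h] at hpos; linarith
  have hleft : w (i₀ - 1) < w i₀ := by
    have := Nat.find_min hex (Nat.sub_lt h1 one_pos)
    push Not at this
    obtain ⟨j, hj, hjlt⟩ := this (by omega)
    exact hjlt.trans_le (hmax j hj)
  have hright := hmax (i₀ + 1) hlt
  have := two_mul_le_of_discreteLaplacian_nonneg hh (hw i₀ h1 hlt hpos)
  linarith

theorem le_of_discreteLaplacian_of_monotone {N : ℕ} {h : ℝ} (hh : h ≠ 0) {f : ℝ → ℝ}
    (hf : Monotone f) {u v : ℕ → ℝ} (h0 : u 0 ≤ v 0) (hN : u N ≤ v N)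
    (hu : ∀ i, 1 ≤ i → i < N → f (u i) ≤ discreteLaplacian h u i)
    (hv : ∀ i, 1 ≤ i → i < N → discreteLaplacian h v i ≤ f (v i)) :
    ∀ i ≤ N, u i ≤ v i := by
  have hw : ∀ i, 1 ≤ i → i < N → 0 < (u - v) i → 0 ≤ discreteLaplacian h (u - v) i := by
    intro i h1 hlt hpos
    have : f (v i) ≤ f (u i) := hf (sub_pos.1 hpos).le
    rw [discreteLaplacian_sub]
    linarith [hu i h1 hlt, hv i h1 hlt]
  intro i hi
  exact sub_nonpos.1 (nonpos_of_discreteLaplacian_nonneg_of_pos hh (sub_nonpos.2 h0)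
    (sub_nonpos.2 hN) hw i hi)

theorem stmt_3_general (N : ℕ) (h : ℝ) (hh : 0 < h)
    (f : ℝ → ℝ) (hf : Monotone f) (u v : ℕ → ℝ)
    (hb0 : u 0 = v 0) (hbN : u N = v N)
    (hu : ∀ i, 1 ≤ i → i < N → (u (i - 1) - 2 * u i + u (i + 1)) / h ^ 2 = f (u i))
    (hv : ∀ i, 1 ≤ i → i < N → (v (i - 1) - 2 * v i + v (i + 1)) / h ^ 2 = f (v i)) :
    ∀ i ≤ N, u i = v i := by
  intro i hi
  exact le_antisymm
    (le_of_discreteLaplacian_of_monotone hh.ne' hf hb0.le hbN.le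
      (fun j h1 h2 => (hu j h1 h2).ge) (fun j h1 h2 => (hv j h1 h2).le) i hi)
    (le_of_discreteLaplacian_of_monotone hh.ne' hf hb0.ge hbN.ge
      (fun j h1 h2 => (hv j h1 h2).ge) (fun j h1 h2 => (hu j h1 h2).le) i hi)

theorem stmt_3 (N : ℕ) (hN : 2 ≤ N) (h : ℝ) (hh : 0 < h)
    (f : ℝ → ℝ) (hf : Monotone f) (u v : ℕ → ℝ)
    (hb0 : u 0 = v 0) (hbN : u N = v N)
    (hu : ∀ i, 1 ≤ i → i < N → (u (i - 1) - 2 * u i + u (i + 1)) / h ^ 2 = f (u i))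
    (hv : ∀ i, 1 ≤ i → i < N → (v (i - 1) - 2 * v i + v (i + 1)) / h ^ 2 = f (v i)) :
    ∀ i ≤ N, u i = v i :=
  stmt_3_general N h hh f hf u v hb0 hbN hu hv
end

section
/- Let f₁, f₂ : ℝ → ℝ be nondecreasing with f₁(0) = f₂(0) = 0. If w, v : {0,...,N} → ℝ both solve the discrete min-max equation min(-(L_h u)_i + f₁(u_i), max(-(L_h u)_i - f₂(-u_i), u_i)) = 0 for all interior i with the same boundary values w_0 = v_0 and w_N = v_N, then w = v. -/
/-!
Both components of the scheme `min (p + f₁ x) (max (p - f₂ (-x)) x)` are strictly increasing in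
`(p, x)` jointly, since `f₁` and `f₂` are monotone. If a subsolution `w` exceeded a supersolution `v`
somewhere, take the leftmost interior point where `w - v` attains its positive maximum: there
`-L_h w > -L_h v` and `w > v`, so the scheme is strictly larger at `w` than at `v`, contradicting
`F[w] ≤ 0 ≤ F[v]`. Uniqueness is comparison applied in both directions.
-/

noncomputable def negDiscreteLaplacian (h : ℝ) (u : ℕ → ℝ) (i : ℕ) : ℝ :=
  -((u (i - 1) - 2 * u i + u (i + 1)) / h ^ 2)

def twoPhaseScheme (f₁ f₂ : ℝ → ℝ) (p x : ℝ) : ℝ :=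
  min (p + f₁ x) (max (p - f₂ (-x)) x)

lemma twoPhaseScheme_lt_twoPhaseScheme {f₁ f₂ : ℝ → ℝ} (hf₁ : Monotone f₁) (hf₂ : Monotone f₂)
    {p q x y : ℝ} (hpq : p < q) (hxy : x < y) :
    twoPhaseScheme f₁ f₂ p x < twoPhaseScheme f₁ f₂ q y :=
  min_lt_min (add_lt_add_of_lt_of_le hpq (hf₁ hxy.le))
    (max_lt_max (by linarith [hf₂ (neg_le_neg hxy.le)]) hxy)

lemma negDiscreteLaplacian_lt_of_sub_localMax {h : ℝ} (hh : h ≠ 0) {v w : ℕ → ℝ} {i : ℕ}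
    (hleft : w (i - 1) - v (i - 1) < w i - v i) (hright : w (i + 1) - v (i + 1) ≤ w i - v i) :
    negDiscreteLaplacian h v i < negDiscreteLaplacian h w i := by
  unfold negDiscreteLaplacian
  rw [neg_lt_neg_iff, div_lt_div_iff_of_pos_right (by positivity)]
  linarith

/-- The leftmost maximiser of `d` on `{0, …, N}` is a strict maximum from the left. -/
lemma exists_interior_max_gt {α : Type*} [LinearOrder α] {d : ℕ → α} {c : α} {N k : ℕ}
    (hkN : k ≤ N) (hk : c < d k) (h0 : d 0 ≤ c) (hN : d N ≤ c) :
    ∃ i, 1 ≤ i ∧ i < N ∧ c < d i ∧ d (i - 1) < d i ∧ d (i + 1) ≤ d i := by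
  classical
  have hex : ∃ i, i ≤ N ∧ ∀ j ≤ N, d j ≤ d i := by
    obtain ⟨i, hi, hmax⟩ := (Finset.range (N + 1)).exists_max_image d ⟨0, by simp⟩
    exact ⟨i, by simpa [Nat.lt_succ_iff] using hi,
      fun j hj => hmax j (by simpa [Nat.lt_succ_iff] using hj)⟩
  obtain ⟨hiN, hmax⟩ := Nat.find_spec hex
  set i := Nat.find hex
  have hci : c < d i := hk.trans_le (hmax k hkN)
  have hi0 : i ≠ 0 := fun h => (h0.trans_lt (h ▸ hci)).false
  have hiN' : i ≠ N := fun h => (hN.trans_lt (h ▸ hci)).false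
  refine ⟨i, Nat.one_le_iff_ne_zero.mpr hi0, lt_of_le_of_ne hiN hiN', hci, ?_,
    hmax _ (by omega)⟩
  have hnot := Nat.find_min hex (show i - 1 < i by omega)
  simp only [not_and, not_forall, not_le] at hnot
  obtain ⟨j, hjN, hj⟩ := hnot (by omega)
  exact hj.trans_le (hmax j hjN)

theorem twoPhaseScheme_comparison {N : ℕ} {h : ℝ} (hh : h ≠ 0) {f₁ f₂ : ℝ → ℝ}
    (hf₁ : Monotone f₁) (hf₂ : Monotone f₂) {w v : ℕ → ℝ} (h0 : w 0 ≤ v 0) (hN : w N ≤ v N)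
    (hw : ∀ i, 1 ≤ i → i < N →
      twoPhaseScheme f₁ f₂ (negDiscreteLaplacian h w i) (w i) ≤ 0)
    (hv : ∀ i, 1 ≤ i → i < N →
      0 ≤ twoPhaseScheme f₁ f₂ (negDiscreteLaplacian h v i) (v i)) :
    ∀ i ≤ N, w i ≤ v i := by
  by_contra! ⟨k, hkN, hk⟩
  obtain ⟨i, hi1, hiN, hpos, hleft, hright⟩ :=
    exists_interior_max_gt (d := fun j => w j - v j) hkN (sub_pos.mpr hk)
      (sub_nonpos.mpr h0) (sub_nonpos.mpr hN)
  have hlt := twoPhaseScheme_lt_twoPhaseScheme hf₁ hf₂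
    (negDiscreteLaplacian_lt_of_sub_localMax hh hleft hright) (sub_pos.mp hpos)
  linarith [hw i hi1 hiN, hv i hi1 hiN]

theorem stmt_7_general (N : ℕ) (h : ℝ) (hh : 0 < h)
    (f₁ f₂ : ℝ → ℝ) (hf₁ : Monotone f₁) (hf₂ : Monotone f₂)
    (w v : ℕ → ℝ) (hb0 : w 0 = v 0) (hbN : w N = v N)
    (hw : ∀ i, 1 ≤ i → i < N →
      min (-((w (i - 1) - 2 * w i + w (i + 1)) / h ^ 2) + f₁ (w i))
        (max (-((w (i - 1) - 2 * w i + w (i + 1)) / h ^ 2) - f₂ (-(w i))) (w i)) = 0)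
    (hv : ∀ i, 1 ≤ i → i < N →
      min (-((v (i - 1) - 2 * v i + v (i + 1)) / h ^ 2) + f₁ (v i))
        (max (-((v (i - 1) - 2 * v i + v (i + 1)) / h ^ 2) - f₂ (-(v i))) (v i)) = 0) :
    ∀ i ≤ N, w i = v i := fun i hi =>
  le_antisymm
    (twoPhaseScheme_comparison hh.ne' hf₁ hf₂ hb0.le hbN.le
      (fun j hj hjN => (hw j hj hjN).le) (fun j hj hjN => (hv j hj hjN).ge) i hi)
    (twoPhaseScheme_comparison hh.ne' hf₁ hf₂ hb0.ge hbN.ge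
      (fun j hj hjN => (hv j hj hjN).le) (fun j hj hjN => (hw j hj hjN).ge) i hi)

theorem stmt_7 (N : ℕ) (hN : 2 ≤ N) (h : ℝ) (hh : 0 < h)
    (f₁ f₂ : ℝ → ℝ) (hf₁ : Monotone f₁) (hf₂ : Monotone f₂)
    (hf₁0 : f₁ 0 = 0) (hf₂0 : f₂ 0 = 0)
    (w v : ℕ → ℝ) (hb0 : w 0 = v 0) (hbN : w N = v N)
    (hw : ∀ i, 1 ≤ i → i < N →
      min (-((w (i - 1) - 2 * w i + w (i + 1)) / h ^ 2) + f₁ (w i))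
        (max (-((w (i - 1) - 2 * w i + w (i + 1)) / h ^ 2) - f₂ (-(w i))) (w i)) = 0)
    (hv : ∀ i, 1 ≤ i → i < N →
      min (-((v (i - 1) - 2 * v i + v (i + 1)) / h ^ 2) + f₁ (v i))
        (max (-((v (i - 1) - 2 * v i + v (i + 1)) / h ^ 2) - f₂ (-(v i))) (v i)) = 0) :
    ∀ i ≤ N, w i = v i :=
  stmt_7_general N h hh f₁ f₂ hf₁ hf₂ w v hb0 hbN hw hv
end

section
/- Fix m ≥ 2 and a finite index set of interior grid points. Suppose the m-tuple of grid functions (w¹,...,wᵐ), each nonnegative on interior points, satisfies at every interior grid point α the fixed-point system w^l_α = max( -f_l(w^l_α) h²/4 + w̄^l_α - ∑_{p≠l} w̄^p_α , 0 ) for l = 1,...,m, where w̄^l_α denotes the average of w^l over the neighbours of α and f_l ≥ 0. Then the supports are disjoint: for every interior α and every pair p ≠ q, w^p_α · w^q_α = 0. -/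
/-- Average of a 2D grid function over the four neighbours of `(i,j)` (5-point stencil). -/
noncomputable def nbrAvg (w : ℕ → ℕ → ℝ) (i j : ℕ) : ℝ :=
  (w (i - 1) j + w (i + 1) j + w i (j - 1) + w i (j + 1)) / 4

/-!
If two components `x p, x q` were positive at the same point, each would be bounded by its own
average minus the other one's, `x p ≤ a p - a q` and `x q ≤ a q - a p`; adding gives
`x p + x q ≤ 0`, which is absurd.
-/

open Finset

lemma eq_of_eq_max_zero_of_pos {α : Type*} [LinearOrder α] [Zero α] {x y : α}
    (hx : x = max y 0) (hpos : 0 < x) : x = y := by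
  rw [hx] at hpos ⊢
  exact max_eq_left (lt_max_iff.1 hpos |>.resolve_right (lt_irrefl 0)).le

section Segregation

variable {ι α : Type*} [Fintype ι] [DecidableEq ι]
  [AddCommGroup α] [LinearOrder α] [IsOrderedAddMonoid α] {a x : ι → α}

lemma sub_sum_sdiff_singleton_le_sub (ha : ∀ l, 0 ≤ a l) {p q : ι} (hpq : p ≠ q) :
    a p - ∑ l ∈ univ \ {p}, a l ≤ a p - a q :=
  sub_le_sub_left (single_le_sum (fun l _ => ha l) (by simpa using hpq.symm)) _

theorem eq_zero_or_eq_zero_of_le_sub_sum (ha : ∀ l, 0 ≤ a l) (hx : ∀ l, 0 ≤ x l)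
    (hle : ∀ l, 0 < x l → x l ≤ a l - ∑ p ∈ univ \ {l}, a p) {p q : ι} (hpq : p ≠ q) :
    x p = 0 ∨ x q = 0 := by
  by_contra! hne
  have hp : 0 < x p := (hx p).lt_of_ne' hne.1
  have hq : 0 < x q := (hx q).lt_of_ne' hne.2
  have hp_le := (hle p hp).trans (sub_sum_sdiff_singleton_le_sub ha hpq)
  have hq_le := (hle q hq).trans (sub_sum_sdiff_singleton_le_sub ha hpq.symm)
  have : x p + x q ≤ 0 := by simpa using add_le_add hp_le hq_le
  exact (add_pos hp hq).not_ge this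

end Segregation

lemma nbrAvg_nonneg {w : ℕ → ℕ → ℝ} {N i j : ℕ} (hw : ∀ i j, i ≤ N → j ≤ N → 0 ≤ w i j)
    (hi : i < N) (hj : j < N) : 0 ≤ nbrAvg w i j := by
  have := hw (i - 1) j (by omega) hj.le
  have := hw (i + 1) j hi hj.le
  have := hw i (j - 1) hi.le (by omega)
  have := hw i (j + 1) hi.le hj
  unfold nbrAvg
  linarith

theorem stmt_8_general (m N : ℕ) (h : ℝ)
    (f : Fin m → ℝ → ℝ) (hf : ∀ l s, 0 ≤ s → 0 ≤ f l s)
    (w : Fin m → ℕ → ℕ → ℝ)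
    (hwpos : ∀ l i j, i ≤ N → j ≤ N → 0 ≤ w l i j)
    (hfix : ∀ (l : Fin m) i j, 1 ≤ i → i < N → 1 ≤ j → j < N →
      w l i j = max (-(f l (w l i j)) * h ^ 2 / 4 + nbrAvg (w l) i j -
        ∑ p ∈ Finset.univ \ {l}, nbrAvg (w p) i j) 0) :
    ∀ i j, 1 ≤ i → i < N → 1 ≤ j → j < N →
      ∀ p q : Fin m, p ≠ q → w p i j * w q i j = 0 := by
  intro i j hi1 hiN hj1 hjN p q hpq
  have hw : ∀ l, 0 ≤ w l i j := fun l => hwpos l i j hiN.le hjN.le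
  refine mul_eq_zero.2 <| eq_zero_or_eq_zero_of_le_sub_sum (a := fun l => nbrAvg (w l) i j)
    (fun l => nbrAvg_nonneg (hwpos l) hiN hjN) hw (fun l hl => ?_) hpq
  have hwl := eq_of_eq_max_zero_of_pos (hfix l i j hi1 hiN hj1 hjN) hl
  have hpenalty : 0 ≤ f l (w l i j) * h ^ 2 / 4 := by
    have := hf l _ (hw l)
    positivity
  linarith

theorem stmt_8 (m N : ℕ) (hm : 2 ≤ m) (hN : 2 ≤ N) (h : ℝ) (hh : 0 < h)
    (f : Fin m → ℝ → ℝ) (hf : ∀ l s, 0 ≤ s → 0 ≤ f l s)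
    (w : Fin m → ℕ → ℕ → ℝ)
    (hwpos : ∀ l i j, i ≤ N → j ≤ N → 0 ≤ w l i j)
    (hfix : ∀ (l : Fin m) i j, 1 ≤ i → i < N → 1 ≤ j → j < N →
      w l i j = max (-(f l (w l i j)) * h ^ 2 / 4 + nbrAvg (w l) i j -
        ∑ p ∈ Finset.univ \ {l}, nbrAvg (w p) i j) 0) :
    ∀ i j, 1 ≤ i → i < N → 1 ≤ j → j < N →
      ∀ p q : Fin m, p ≠ q → w p i j * w q i j = 0 :=
  stmt_8_general m N h f hf w hwpos hfix
end

section
/- Consider the 2D iteration on a uniform grid: for each species l = 1,...,m, (u^l_α)^{(k+1)} = max( -f_l((u^l_α)^{(k)}) h²/4 + (ū^l_α)^{(k)} - ∑_{p≠l} (ū^p_α)^{(k)}, 0 ) at interior points, with fixed nonnegative boundary values (u^l_α)^{(k)} = φ^l_α on the boundary for all k, initialized at 0 in the interior. Assume f_l(s) ≥ 0 for all s ≥ 0. Then for every k and every grid point α, 0 ≤ (u^l_α)^{(k)} ≤ max_β φ^l_β. -/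
/-!
The interior update is `max (x, 0)` with `x ≤ ū^l`, because the reaction term `f_l(u) h²/4` and the
averages of the other species are nonnegative as soon as the previous iterate is. So if the previous
iterate lies in `[0, M_l]` on the whole grid, so does its neighbour average `ū^l`, hence so does the
new iterate; induction on `k` does the rest.
-/

open Finset

section NbrAvg

variable {w : ℕ → ℕ → ℝ} {N i j : ℕ} {c : ℝ}

lemma nbrAvg_le_of_le_on_grid (hw : ∀ a b, a ≤ N → b ≤ N → w a b ≤ c) (hi : i < N) (hj : j < N) :
    nbrAvg w i j ≤ c := by
  have := hw (i - 1) j (by omega) hj.le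
  have := hw (i + 1) j hi hj.le
  have := hw i (j - 1) hi.le (by omega)
  have := hw i (j + 1) hi.le hj
  unfold nbrAvg
  linarith

lemma le_nbrAvg_of_le_on_grid (hw : ∀ a b, a ≤ N → b ≤ N → c ≤ w a b) (hi : i < N) (hj : j < N) :
    c ≤ nbrAvg w i j := by
  have := hw (i - 1) j (by omega) hj.le
  have := hw (i + 1) j hi hj.le
  have := hw i (j - 1) hi.le (by omega)
  have := hw i (j + 1) hi.le hj
  unfold nbrAvg
  linarith

end NbrAvg

lemma le_sup'_grid (g : ℕ → ℕ → ℝ) {N i j : ℕ} (hi : i ≤ N) (hj : j ≤ N) :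
    g i j ≤ ((range (N + 1)) ×ˢ (range (N + 1))).sup' ⟨(0, 0), by simp⟩ (fun p => g p.1 p.2) :=
  le_sup' (fun p : ℕ × ℕ => g p.1 p.2) (b := (i, j))
    (mem_product.2 ⟨mem_range.2 (by omega), mem_range.2 (by omega)⟩)

lemma max_update_mem_Icc {m N i j : ℕ} (f : Fin m → ℝ → ℝ) (hf : ∀ l s, 0 ≤ s → 0 ≤ f l s)
    (h : ℝ) (M : Fin m → ℝ) (hM : ∀ l, 0 ≤ M l) (w : Fin m → ℕ → ℕ → ℝ)
    (hw : ∀ l a b, a ≤ N → b ≤ N → w l a b ∈ Set.Icc 0 (M l)) (hi : i < N) (hj : j < N) (l : Fin m) :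
    max (-(f l (w l i j)) * h ^ 2 / 4 + nbrAvg (w l) i j -
      ∑ p ∈ univ \ {l}, nbrAvg (w p) i j) 0 ∈ Set.Icc 0 (M l) := by
  have hreaction : 0 ≤ f l (w l i j) * h ^ 2 :=
    mul_nonneg (hf l _ (hw l i j hi.le hj.le).1) (sq_nonneg h)
  have hothers : 0 ≤ ∑ p ∈ univ \ {l}, nbrAvg (w p) i j :=
    sum_nonneg fun p _ => le_nbrAvg_of_le_on_grid (fun a b ha hb => (hw p a b ha hb).1) hi hj
  have havg : nbrAvg (w l) i j ≤ M l :=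
    nbrAvg_le_of_le_on_grid (fun a b ha hb => (hw l a b ha hb).2) hi hj
  refine ⟨le_max_right _ _, max_le ?_ (hM l)⟩
  linarith

theorem stmt_10 (m N : ℕ) (h : ℝ)
    (f : Fin m → ℝ → ℝ) (hf : ∀ l s, 0 ≤ s → 0 ≤ f l s)
    (φ : Fin m → ℕ → ℕ → ℝ) (hφ : ∀ l i j, 0 ≤ φ l i j)
    (u : ℕ → Fin m → ℕ → ℕ → ℝ)
    (hbdry : ∀ k (l : Fin m) i j, i ≤ N → j ≤ N →
      (i = 0 ∨ i = N ∨ j = 0 ∨ j = N) → u k l i j = φ l i j)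
    (hinit : ∀ (l : Fin m) i j, 1 ≤ i → i < N → 1 ≤ j → j < N → u 0 l i j = 0)
    (hiter : ∀ k (l : Fin m) i j, 1 ≤ i → i < N → 1 ≤ j → j < N →
      u (k + 1) l i j = max (-(f l (u k l i j)) * h ^ 2 / 4 + nbrAvg (u k l) i j -
        ∑ p ∈ Finset.univ \ {l}, nbrAvg (u k p) i j) 0) :
    ∀ k (l : Fin m) i j, i ≤ N → j ≤ N →
      0 ≤ u k l i j ∧
      u k l i j ≤ ((Finset.range (N + 1)) ×ˢ (Finset.range (N + 1))).sup'
        ⟨(0, 0), by simp⟩ (fun p => φ l p.1 p.2) := by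
  set M : Fin m → ℝ := fun l => ((range (N + 1)) ×ˢ (range (N + 1))).sup'
    ⟨(0, 0), by simp⟩ (fun p => φ l p.1 p.2)
  have hM : ∀ l, 0 ≤ M l := fun l => (hφ l 0 0).trans (le_sup'_grid (φ l) N.zero_le N.zero_le)
  intro k
  induction k with
  | zero =>
    intro l i j hi hj
    by_cases hb : i = 0 ∨ i = N ∨ j = 0 ∨ j = N
    · rw [hbdry 0 l i j hi hj hb]; exact ⟨hφ l i j, le_sup'_grid (φ l) hi hj⟩
    · rw [hinit l i j (by omega) (by omega) (by omega) (by omega)]; exact ⟨le_rfl, hM l⟩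
  | succ k ih =>
    intro l i j hi hj
    by_cases hb : i = 0 ∨ i = N ∨ j = 0 ∨ j = N
    · rw [hbdry _ l i j hi hj hb]; exact ⟨hφ l i j, le_sup'_grid (φ l) hi hj⟩
    · rw [hiter k l i j (by omega) (by omega) (by omega) (by omega)]
      exact max_update_mem_Icc f hf h M hM (u k) ih (by omega) (by omega) l
end

section
/- Fix h > 0, K ∈ ℕ, and nondecreasing f₁, f₂ : ℝ → ℝ. Define F : ℝ × ℝᴷ → ℝ by F(u, d) = min( (∑_j d_j)/h² + f₁(u), max( (∑_j d_j)/h² - f₂(-u), u ) ), where d_j represents the difference u_i - u_{i_j} with the j-th neighbour. Then F is nondecreasing in u and nondecreasing in each d_j; i.e., the scheme is degenerate elliptic in the sense of Oberman. -/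
/-- Scheme (29) at a node, with `s` standing for `-L_h u_i = ∑_j (u_i - u_{i_j}) / h ^ 2`. -/
def obstacleScheme {α : Type*} [AddCommGroup α] [LinearOrder α] (f₁ f₂ : α → α) (s u : α) : α :=
  min (s + f₁ u) (max (s - f₂ (-u)) u)

section

variable {α : Type*} [AddCommGroup α] [LinearOrder α] [IsOrderedAddMonoid α] {f₁ f₂ : α → α}

theorem monotone_obstacleScheme_right (hf₁ : Monotone f₁) (hf₂ : Monotone f₂) (s : α) :
    Monotone (obstacleScheme f₁ f₂ s) := fun u v huv => by
  have hf₂' : f₂ (-v) ≤ f₂ (-u) := hf₂ (neg_le_neg huv)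
  dsimp only [obstacleScheme]
  gcongr
  exact hf₁ huv

theorem monotone_obstacleScheme_left (u : α) :
    Monotone fun s => obstacleScheme f₁ f₂ s u := fun s t hst => by
  dsimp only [obstacleScheme]
  gcongr

end

theorem monotone_sum_div_sq (K : ℕ) (h : ℝ) :
    Monotone fun d : Fin K → ℝ => (∑ j, d j) / h ^ 2 :=
  fun _ _ hde => div_le_div_of_nonneg_right (Finset.sum_le_sum fun j _ => hde j) (sq_nonneg h)

theorem stmt_17_general (K : ℕ) (h : ℝ)
    (f₁ f₂ : ℝ → ℝ) (hf₁ : Monotone f₁) (hf₂ : Monotone f₂) :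
    (∀ d : Fin K → ℝ, Monotone (fun u : ℝ =>
      min ((∑ j, d j) / h ^ 2 + f₁ u) (max ((∑ j, d j) / h ^ 2 - f₂ (-u)) u))) ∧
    (∀ u : ℝ, Monotone (fun d : Fin K → ℝ =>
      min ((∑ j, d j) / h ^ 2 + f₁ u) (max ((∑ j, d j) / h ^ 2 - f₂ (-u)) u))) :=
  ⟨fun _ => monotone_obstacleScheme_right hf₁ hf₂ _,
    fun u => (monotone_obstacleScheme_left (f₁ := f₁) (f₂ := f₂) u).comp (monotone_sum_div_sq K h)⟩

theorem stmt_17 (K : ℕ) (h : ℝ) (hh : 0 < h)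
    (f₁ f₂ : ℝ → ℝ) (hf₁ : Monotone f₁) (hf₂ : Monotone f₂) :
    (∀ d : Fin K → ℝ, Monotone (fun u : ℝ =>
      min ((∑ j, d j) / h ^ 2 + f₁ u) (max ((∑ j, d j) / h ^ 2 - f₂ (-u)) u))) ∧
    (∀ u : ℝ, Monotone (fun d : Fin K → ℝ =>
      min ((∑ j, d j) / h ^ 2 + f₁ u) (max ((∑ j, d j) / h ^ 2 - f₂ (-u)) u))) :=
  stmt_17_general K h f₁ f₂ hf₁ hf₂
end
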